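/- Let (X,Y,Z) be a solution of the system (S) and let η be a time at which X(η) ≥ 0, −β/(2α) ≤ Y(η) ≤ 0, and Z(η) = −Y(η)² − (β/α)Y(η) (i.e., the point lies on the parabolic cylinder). Then the function W(η) = Z(η) + Y(η)² + (β/α)Y(η) satisfies W'(η) ≥ 0 at this time; equivalently, for every y ∈ [−β/(2α), 0] one has σ y² + ((σ−1)(β/α) − 2) y − β/α ≤ 0, so the flow of (S) on this part of the cylinder points from the interior toward the exterior. -/

import Mathlib

open Real Set Filter Topology

/-!
On the cylinder `Z = -Y² - bY` (with `b = β/α`) the `Y`-equation reduces to `Y' = X(1 - Y)`,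
and the derivative of the defect `W = Z + Y² + bY` factors as `W' = -X q(Y)` with
`q(y) = σy² + ((σ-1)b - 2)y - b`. The quadratic `q` is convex and negative at both ends of
`[-b/2, 0]`, hence nonpositive on the whole interval, so `W' ≥ 0` wherever `X ≥ 0`.
-/

/-- The self-similar exponent `α = (σ+2)/((σ-2)(m-1))`. -/
noncomputable def ssAlpha (m σ : ℝ) : ℝ := (σ + 2) / ((σ - 2) * (m - 1))

/-- The self-similar exponent `β = 2/(σ-2)`. -/
noncomputable def ssBeta (σ : ℝ) : ℝ := 2 / (σ - 2)

/-- `(X,Y,Z)` satisfies the quadratic system (S) at time `η`: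
`X' = X((m−1)Y − 2X)`, `Y' = −Y² − (β/α)Y + X − XY − Z`, `Z' = (σ−2)XZ`. -/
def SysAt (m σ : ℝ) (X Y Z : ℝ → ℝ) (η : ℝ) : Prop :=
  HasDerivAt X (X η * ((m - 1) * Y η - 2 * X η)) η ∧
  HasDerivAt Y (-(Y η) ^ 2 - ssBeta σ / ssAlpha m σ * Y η + X η - X η * Y η - Z η) η ∧
  HasDerivAt Z ((σ - 2) * X η * Z η) η

/-- The equilibrium `P0^λ = (0, λ, −λ² − (β/α)λ)` on the critical parabola. -/
noncomputable def P0pt (m σ l : ℝ) : ℝ × ℝ × ℝ :=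
  (0, l, -l ^ 2 - ssBeta σ / ssAlpha m σ * l)

/-- The equilibrium `P2 = ((m−1)/(2(m+1)α), 1/((m+1)α), 0)`. -/
noncomputable def P2pt (m σ : ℝ) : ℝ × ℝ × ℝ :=
  ((m - 1) / (2 * (m + 1) * ssAlpha m σ), 1 / ((m + 1) * ssAlpha m σ), 0)

def cylinderQuad (σ b y : ℝ) : ℝ :=
  σ * y ^ 2 + ((σ - 1) * b - 2) * y - b

lemma cylinderQuad_nonpos {σ b y : ℝ} (hσ : 2 ≤ σ) (hb : 0 ≤ b) (hy : y ∈ Icc (-(b / 2)) 0) :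
    cylinderQuad σ b y ≤ 0 := by
  obtain ⟨hy₁, hy₂⟩ := hy
  -- `q` minus its chord on `[-b/2, 0]` is `σ y (y + b/2)`; each remaining term is nonpositive.
  have hsplit : cylinderQuad σ b y = σ * (y * (y + b / 2)) - (b + 2 * y) + (σ - 2) * b * y / 2 := by
    unfold cylinderQuad; ring
  have hparab : y * (y + b / 2) ≤ 0 := mul_nonpos_of_nonpos_of_nonneg hy₂ (by linarith)
  have hlin : (σ - 2) * b * y ≤ 0 :=
    mul_nonpos_of_nonneg_of_nonpos (mul_nonneg (by linarith) hb) hy₂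
  rw [hsplit]
  nlinarith

lemma ssBeta_div_ssAlpha_pos {m σ : ℝ} (hm : 1 < m) (hσ : 2 < σ) :
    0 < ssBeta σ / ssAlpha m σ := by
  have hσ₀ : 0 < σ - 2 := by linarith
  have hm₀ : 0 < m - 1 := by linarith
  unfold ssBeta ssAlpha
  positivity

lemma SysAt.hasDerivAt_cylinder_defect {m σ : ℝ} {X Y Z : ℝ → ℝ} {η : ℝ}
    (hsys : SysAt m σ X Y Z η) (hZ : Z η = -(Y η) ^ 2 - ssBeta σ / ssAlpha m σ * Y η) :
    HasDerivAt (fun t => Z t + (Y t) ^ 2 + ssBeta σ / ssAlpha m σ * Y t)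
      (-(X η * cylinderQuad σ (ssBeta σ / ssAlpha m σ) (Y η))) η := by
  obtain ⟨-, hY, hZ'⟩ := hsys
  refine ((hZ'.add (hY.fun_pow 2)).add (hY.const_mul _)).congr_deriv ?_
  rw [cylinderQuad, hZ]
  ring

theorem flow_on_cylinder_points_outward_general
    (m σ : ℝ) (hm1 : 1 < m) (hσ : 2 < σ)
    (X Y Z : ℝ → ℝ) (η : ℝ)
    (hsys : SysAt m σ X Y Z η)
    (hX : 0 ≤ X η)
    (hY1 : -(ssBeta σ / (2 * ssAlpha m σ)) ≤ Y η) (hY2 : Y η ≤ 0)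
    (hZ : Z η = -(Y η) ^ 2 - ssBeta σ / ssAlpha m σ * Y η) :
    (∀ w' : ℝ,
      HasDerivAt (fun t => Z t + (Y t) ^ 2 + ssBeta σ / ssAlpha m σ * Y t) w' η →
      0 ≤ w') ∧
    ∀ y ∈ Icc (-(ssBeta σ / (2 * ssAlpha m σ))) (0 : ℝ),
      σ * y ^ 2 + ((σ - 1) * (ssBeta σ / ssAlpha m σ) - 2) * y
        - ssBeta σ / ssAlpha m σ ≤ 0 := by
  have hb := ssBeta_div_ssAlpha_pos hm1 hσ
  rw [div_mul_eq_div_div_swap] at hY1 ⊢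
  have hq : ∀ y ∈ Icc (-(ssBeta σ / ssAlpha m σ / 2)) 0,
      cylinderQuad σ (ssBeta σ / ssAlpha m σ) y ≤ 0 :=
    fun y hy => cylinderQuad_nonpos hσ.le hb.le hy
  refine ⟨fun w' hw' => ?_, hq⟩
  rw [hw'.unique (hsys.hasDerivAt_cylinder_defect hZ), neg_nonneg]
  exact mul_nonpos_of_nonneg_of_nonpos hX (hq _ ⟨hY1, hY2⟩)

/-- on the part of the parabolic cylinder `{Z = −Y² − (β/α)Y}` with
`X ≥ 0`, `−β/(2α) ≤ Y ≤ 0`, the flow of (S) points from the interior toward the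
exterior: `W = Z + Y² + (β/α)Y` has nonnegative derivative there; equivalently
`σ y² + ((σ−1)(β/α) − 2) y − β/α ≤ 0` for all `y ∈ [−β/(2α), 0]`. -/
theorem flow_on_cylinder_points_outward
    (m σ : ℝ) (hm1 : 1 < m) (hm2 : m < 2) (hσ : 2 < σ)
    (X Y Z : ℝ → ℝ) (η : ℝ)
    (hsys : SysAt m σ X Y Z η)
    (hX : 0 ≤ X η)
    (hY1 : -(ssBeta σ / (2 * ssAlpha m σ)) ≤ Y η) (hY2 : Y η ≤ 0)
    (hZ : Z η = -(Y η) ^ 2 - ssBeta σ / ssAlpha m σ * Y η) :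
    (∀ w' : ℝ,
      HasDerivAt (fun t => Z t + (Y t) ^ 2 + ssBeta σ / ssAlpha m σ * Y t) w' η →
      0 ≤ w') ∧
    ∀ y ∈ Icc (-(ssBeta σ / (2 * ssAlpha m σ))) (0 : ℝ),
      σ * y ^ 2 + ((σ - 1) * (ssBeta σ / ssAlpha m σ) - 2) * y
        - ssBeta σ / ssAlpha m σ ≤ 0 :=
  flow_on_cylinder_points_outward_general m σ hm1 hσ X Y Z η hsys hX hY1 hY2 hZ
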